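/- arXiv:2206.12153 — 2 statements merged into one kernel-verified Lean document; each statement's English description precedes it below -/
import Mathlib

section
/- The cotransitions of the double-insertion chain are the pattern frequencies: P(Π^H_n = σ | Π^H_{n+1} = τ) = t(σ, τ) for all n, σ ∈ S_n, τ ∈ S_{n+1}. -/
/-- `patFreq σ π` is the relative frequency `t(σ, π)` of the pattern `σ ∈ S_k` in
`π ∈ S_n`: the fraction of `k`-element subsets of `[n]` (encoded as strictly increasing
maps) whose induced pattern equals `σ`; it is `0` when `k > n`. -/
def patFreq {k n : ℕ} (σ : Equiv.Perm (Fin k)) (π : Equiv.Perm (Fin n)) : ℚ :=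
  (((Finset.univ : Finset (Fin k → Fin n)).filter
      (fun f => (∀ i j : Fin k, i < j → f i < f j) ∧
        (∀ i j : Fin k, σ i < σ j ↔ π (f i) < π (f j)))).card : ℚ) / (n.choose k)

/-- Insertion of the value `J` at position `I` into the permutation `π ∈ S_n`:
the resulting permutation `τ ∈ S_{n+1}` satisfies `τ I = J`, and on the remaining
positions the values of `π` keep their relative order (positions `≥ I` are shifted right
and values `≥ J` are incremented). -/
def insertPerm {n : ℕ} (π : Equiv.Perm (Fin n)) (I J : Fin (n + 1)) :
    Equiv.Perm (Fin (n + 1)) :=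
  ((finSuccEquiv' I).trans (Equiv.optionCongr π)).trans (finSuccEquiv' J).symm

/-- One-step transition probability of the double-insertion chain `Π^H`: insert a
uniform value `J` at a uniform position `I`, both on `[n+1]`, independently. -/
def pstepH {n : ℕ} (π : Equiv.Perm (Fin n)) (τ : Equiv.Perm (Fin (n + 1))) : ℚ :=
  (((Finset.univ : Finset (Fin (n + 1) × Fin (n + 1))).filter
      (fun p => insertPerm π p.1 p.2 = τ)).card : ℚ) / ((n + 1) ^ 2)

/-- `pH k σ m τ` is the `m`-step transition probability
`P(Π^H_{k+m} = τ | Π^H_k = σ)` of the double-insertion Markov chain. -/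
def pH (k : ℕ) (σ : Equiv.Perm (Fin k)) : (m : ℕ) → Equiv.Perm (Fin (k + m)) → ℚ
  | 0, τ => if σ = τ then 1 else 0
  | m + 1, τ => ∑ ρ : Equiv.Perm (Fin (k + m)), pH k σ m ρ * pstepH ρ τ

/-!
Every `τ ∈ S_{n+1}` arises by one insertion step from exactly `n + 1` triples `(ρ, I, J)`, one for
each position `I` (with `J = τ I` and `ρ` the rest of `τ`, standardised). Hence the chain started at
`(1)` is uniform, `P(Π^H_n = σ) = 1/n!`, and the cotransition equals
`#{(I, J) : σ with J inserted at I is τ} / (n + 1)`. The map `(I, J) ↦ Fin.succAbove I` is a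
bijection from these pairs onto the occurrences of `σ` in `τ`, and `(n+1).choose n = n + 1`.
-/

open Finset

lemma Equiv.optionCongr_removeNone {α β : Type*} {e : Option α ≃ Option β} (h : e none = none) :
    Equiv.optionCongr (Equiv.removeNone e) = e := by
  ext1 x
  cases x with
  | none => simp [h]
  | some a =>
    have hne : e (some a) ≠ none := (e.injective.ne (Option.some_ne_none a)).trans_eq h
    obtain ⟨b, hb⟩ := Option.ne_none_iff_exists'.1 hne
    rw [Equiv.optionCongr_apply, Option.map_some, Equiv.removeNone_some e ⟨b, hb⟩]

abbrev IsOccurrence {k n : ℕ} (σ : Equiv.Perm (Fin k)) (π : Equiv.Perm (Fin n))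
    (f : Fin k → Fin n) : Prop :=
  (∀ i j : Fin k, i < j → f i < f j) ∧ ∀ i j : Fin k, σ i < σ j ↔ π (f i) < π (f j)

lemma patFreq_eq_card_div {k n : ℕ} (σ : Equiv.Perm (Fin k)) (π : Equiv.Perm (Fin n)) :
    patFreq σ π = (#{f | IsOccurrence σ π f} : ℚ) / n.choose k :=
  rfl

section Insertion

variable {n : ℕ}

@[simp]
lemma insertPerm_apply_self (π : Equiv.Perm (Fin n)) (I J : Fin (n + 1)) :
    insertPerm π I J I = J := by
  simp [insertPerm]

@[simp]
lemma insertPerm_apply_succAbove (π : Equiv.Perm (Fin n)) (I J : Fin (n + 1)) (k : Fin n) :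
    insertPerm π I J (I.succAbove k) = J.succAbove (π k) := by
  simp [insertPerm]

lemma insertPerm_eq_iff {π : Equiv.Perm (Fin n)} {I J : Fin (n + 1)}
    {τ : Equiv.Perm (Fin (n + 1))} :
    insertPerm π I J = τ ↔ τ I = J ∧ ∀ k, τ (I.succAbove k) = J.succAbove (π k) := by
  constructor
  · rintro rfl
    simp
  · rintro ⟨hI, hsucc⟩
    ext x : 1
    rcases eq_or_ne x I with rfl | hx
    · rw [insertPerm_apply_self, hI]
    · obtain ⟨k, rfl⟩ := Fin.exists_succAbove_eq hx
      rw [insertPerm_apply_succAbove, hsucc]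

lemma insertPerm_left_injective (I J : Fin (n + 1)) :
    Function.Injective fun π : Equiv.Perm (Fin n) => insertPerm π I J := by
  intro π ρ h
  ext k : 1
  simpa using congr($h (I.succAbove k))

/-- The inverse of insertion at position `I`: delete the entry `τ I` and standardise. -/
def erasePerm (τ : Equiv.Perm (Fin (n + 1))) (I : Fin (n + 1)) : Equiv.Perm (Fin n) :=
  Equiv.removeNone (((finSuccEquiv' I).symm.trans τ).trans (finSuccEquiv' (τ I)))

lemma insertPerm_erasePerm (τ : Equiv.Perm (Fin (n + 1))) (I : Fin (n + 1)) :
    insertPerm (erasePerm τ I) I (τ I) = τ := by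
  rw [insertPerm, erasePerm, Equiv.optionCongr_removeNone (by simp)]
  ext x
  simp

lemma insertPerm_eq_iff_erasePerm {ρ : Equiv.Perm (Fin n)} {I J : Fin (n + 1)}
    {τ : Equiv.Perm (Fin (n + 1))} :
    insertPerm ρ I J = τ ↔ τ I = J ∧ ρ = erasePerm τ I := by
  constructor
  · rintro rfl
    refine ⟨insertPerm_apply_self .., insertPerm_left_injective I J ?_⟩
    simpa using (insertPerm_erasePerm (insertPerm ρ I J) I).symm
  · rintro ⟨rfl, rfl⟩
    exact insertPerm_erasePerm τ I

lemma card_filter_insertPerm_eq (I J : Fin (n + 1)) (τ : Equiv.Perm (Fin (n + 1))) :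
    #{ρ : Equiv.Perm (Fin n) | insertPerm ρ I J = τ} = if τ I = J then 1 else 0 := by
  simp_rw [insertPerm_eq_iff_erasePerm]
  split_ifs with h <;> simp [h, filter_eq']

lemma sum_pstepH (τ : Equiv.Perm (Fin (n + 1))) :
    ∑ ρ : Equiv.Perm (Fin n), pstepH ρ τ = 1 / ((n : ℚ) + 1) := by
  have hcount : ∑ ρ : Equiv.Perm (Fin n),
      #{p : Fin (n + 1) × Fin (n + 1) | insertPerm ρ p.1 p.2 = τ} = n + 1 := by
    simp_rw [card_filter]
    rw [sum_comm]
    simp_rw [← card_filter, card_filter_insertPerm_eq, Fintype.sum_prod_type]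
    simp
  unfold pstepH
  rw [← sum_div, ← Nat.cast_sum, hcount]
  field_simp
  push_cast
  ring

lemma pH_one_one (m : ℕ) (σ : Equiv.Perm (Fin (1 + m))) :
    pH 1 1 m σ = 1 / ((1 + m).factorial : ℚ) := by
  induction m with
  | zero =>
    have : (1 : Equiv.Perm (Fin 1)) = σ := Subsingleton.elim _ _
    simp [pH, this]
  | succ m ih =>
    rw [pH]
    simp only [ih, ← mul_sum, sum_pstepH]
    rw [← add_assoc, Nat.factorial_succ]
    push_cast
    field_simp

lemma Fin.eq_succAbove_of_strictMono {f : Fin n → Fin (n + 1)} (hf : StrictMono f)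
    {I : Fin (n + 1)} (hI : ∀ x, f x ≠ I) : f = I.succAbove := by
  rw [Finset.orderEmbOfFin_unique (s := {I}ᶜ) (by simp [card_compl]) (by simpa using hI) hf,
    Finset.orderEmbOfFin_compl_singleton_eq_succAboveOrderEmb]
  rfl

lemma Fin.exists_notMem_range (f : Fin n → Fin (n + 1)) : ∃ I, ∀ x, f x ≠ I := by
  by_contra! h
  simpa using Fintype.card_le_of_surjective f h

lemma isOccurrence_succAbove {σ : Equiv.Perm (Fin n)} {τ : Equiv.Perm (Fin (n + 1))}
    {I J : Fin (n + 1)} (h : insertPerm σ I J = τ) : IsOccurrence σ τ I.succAbove := by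
  obtain ⟨-, hsucc⟩ := insertPerm_eq_iff.1 h
  refine ⟨fun i j hij => Fin.strictMono_succAbove I hij, fun i j => ?_⟩
  rw [hsucc, hsucc, Fin.succAbove_lt_succAbove_iff]

lemma exists_insertPerm_of_isOccurrence {σ : Equiv.Perm (Fin n)}
    {τ : Equiv.Perm (Fin (n + 1))} {f : Fin n → Fin (n + 1)} (hf : IsOccurrence σ τ f) :
    ∃ I, insertPerm σ I (τ I) = τ ∧ I.succAbove = f := by
  obtain ⟨hmono, hpat⟩ := hf
  obtain ⟨I, hI⟩ := Fin.exists_notMem_range f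
  have hf : f = I.succAbove := Fin.eq_succAbove_of_strictMono (fun i j => hmono i j) hI
  -- `τ ∘ f ∘ σ⁻¹` is increasing because `f` is an occurrence, and it misses the value `τ I`.
  have hvalues : (fun i => τ (f (σ.symm i))) = (τ I).succAbove :=
    Fin.eq_succAbove_of_strictMono
      (fun i j hij => (hpat (σ.symm i) (σ.symm j)).1 (by simpa using hij))
      fun x hx => hI _ (τ.injective hx)
  refine ⟨I, insertPerm_eq_iff.2 ⟨rfl, fun k => ?_⟩, hf.symm⟩
  simpa [hf] using congrFun hvalues (σ k)

lemma card_filter_insertPerm_eq_card_isOccurrence (σ : Equiv.Perm (Fin n))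
   (τ : Equiv.Perm (Fin (n + 1))) :
    #{p : Fin (n + 1) × Fin (n + 1) | insertPerm σ p.1 p.2 = τ} =
      #{f : Fin n → Fin (n + 1) | IsOccurrence σ τ f} := by
  apply card_bij (fun p _ => p.1.succAbove)
  · intro p hp
    simpa using isOccurrence_succAbove (mem_filter.1 hp).2
  · rintro ⟨I, J⟩ hp ⟨I', J'⟩ hp' hI
    obtain rfl : I = I' := Fin.succAbove_left_injective hI
    obtain ⟨hJ, -⟩ := insertPerm_eq_iff.1 (mem_filter.1 hp).2
    obtain ⟨hJ', -⟩ := insertPerm_eq_iff.1 (mem_filter.1 hp').2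
    exact Prod.ext rfl (hJ.symm.trans hJ')
  · intro f hf
    obtain ⟨I, hI, rfl⟩ := exists_insertPerm_of_isOccurrence (mem_filter.1 hf).2
    exact ⟨(I, τ I), by simpa using hI, rfl⟩

lemma pstepH_eq_patFreq_div (σ : Equiv.Perm (Fin n)) (τ : Equiv.Perm (Fin (n + 1))) :
    pstepH σ τ = patFreq σ τ / (n + 1) := by
  rw [pstepH, patFreq_eq_card_div, card_filter_insertPerm_eq_card_isOccurrence,
    Nat.choose_succ_self_right]
  push_cast
  field_simp

end Insertion

/-- The cotransitions of the double-insertion chain are the pattern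
frequencies: `P(Π^H_n = σ | Π^H_{n+1} = τ) = t(σ, τ)` for the chain started at
`Π^H_1 = (1)` (here `n = 1 + m`), where the conditional probability is
`P(Π^H_n = σ) p(σ,τ) / P(Π^H_{n+1} = τ)`. -/
theorem pH_cotransition (m : ℕ) (σ : Equiv.Perm (Fin (1 + m)))
    (τ : Equiv.Perm (Fin (1 + m + 1))) :
    pH 1 1 m σ * pstepH σ τ / pH 1 1 (m + 1) τ = patFreq σ τ := by
  rw [pH_one_one, pH_one_one, pstepH_eq_patFreq_div, ← add_assoc, Nat.factorial_succ]
  push_cast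
  field_simp
end

section
/- If a sequence of permutations π_n ∈ S_n satisfies t(21, π_n) → 0 (the inversion frequency vanishes), then for every k and every non-identity σ ∈ S_k, t(σ, π_n) → 0, and consequently t(id_k, π_n) → 1 for every k. -/
open Filter

open Finset

theorem Equiv.Perm.exists_inversion_of_ne_one {k : ℕ} {σ : Equiv.Perm (Fin k)} (hσ : σ ≠ 1) :
    ∃ i j, i < j ∧ σ j < σ i := by
  contrapose! hσ
  exact (Equiv.Perm.monotone_iff σ).1 (monotone_iff_forall_lt.2 hσ)

theorem Equiv.Perm.eq_of_forall_lt_iff_lt {k : ℕ} {σ τ : Equiv.Perm (Fin k)}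
    (h : ∀ i j, σ i < σ j ↔ τ i < τ j) : σ = τ := by
  have hmono : Monotone (τ * σ⁻¹) := fun a b hab => by
    simpa using (h (σ⁻¹ b) (σ⁻¹ a)).not.1 (by simpa using hab)
  have := (Equiv.Perm.monotone_iff _).1 hmono
  rwa [mul_inv_eq_one, eq_comm] at this

theorem Tuple.sort_inv_lt_sort_inv_iff {k : ℕ} {α : Type*} [LinearOrder α] {v : Fin k → α}
    (hv : Function.Injective v) (i j : Fin k) :
    (Tuple.sort v)⁻¹ i < (Tuple.sort v)⁻¹ j ↔ v i < v j := by
  have hsorted : StrictMono (v ∘ Tuple.sort v) :=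
    (Tuple.monotone_sort v).strictMono_of_injective (hv.comp (Equiv.injective _))
  rw [← hsorted.lt_iff_lt]
  simp

theorem StrictMono.eq_of_image_univ_eq {k : ℕ} {α : Type*} [LinearOrder α] [DecidableEq α]
    {f g : Fin k → α} (hf : StrictMono f) (hg : StrictMono g)
    (h : univ.image f = univ.image g) : f = g :=
  (hf.range_inj hg).1 <| by
    simpa [Set.image_univ] using congrArg (fun s : Finset α => (s : Set α)) h

theorem card_filter_strictMono (k n : ℕ) :
    #{f : Fin k → Fin n | StrictMono f} = n.choose k := by
  rw [show n.choose k = #(powersetCard k (univ : Finset (Fin n))) by simp]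
  refine card_bij (fun f _ => univ.image f) (fun f hf => ?_) (fun f hf g hg hfg => ?_)
    (fun s hs => ?_)
  · rw [mem_filter] at hf
    simp [mem_powersetCard, card_image_of_injective _ hf.2.injective]
  · exact (mem_filter.1 hf).2.eq_of_image_univ_eq (mem_filter.1 hg).2 hfg
  · have hs := (mem_powersetCard.1 hs).2
    exact ⟨s.orderEmbOfFin hs, by simp [(s.orderEmbOfFin hs).strictMono],
      coe_injective (by simp)⟩

theorem card_strictMono_with_two_values_le {k n : ℕ} (i j : Fin k) {a b : Fin n} (hab : a ≠ b) :
    #{f : Fin k → Fin n | StrictMono f ∧ f i = a ∧ f j = b} ≤ (n - 2).choose (k - 2) := by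
  have hcompl : #(univ \ {a, b}) = n - 2 := by
    rw [card_sdiff_of_subset (subset_univ _), card_pair hab, card_univ, Fintype.card_fin]
  rw [← hcompl, ← card_powersetCard]
  refine card_le_card_of_injOn (fun f => univ.image f \ {a, b}) (fun f hf => ?_)
    (fun f hf g hg hfg => ?_)
  · obtain ⟨hmono, rfl, rfl⟩ := (mem_filter.1 hf).2
    have hpair : {f i, f j} ⊆ univ.image f := by simp [insert_subset_iff]
    rw [mem_coe, mem_powersetCard]
    refine ⟨sdiff_subset_sdiff (subset_univ _) subset_rfl, ?_⟩
    rw [card_sdiff_of_subset hpair, card_image_of_injective _ hmono.injective, card_pair hab,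
      card_univ, Fintype.card_fin]
  · obtain ⟨hfmono, rfl, rfl⟩ := (mem_filter.1 hf).2
    obtain ⟨hgmono, hgi, hgj⟩ := (mem_filter.1 hg).2
    refine hfmono.eq_of_image_univ_eq hgmono ?_
    rw [← sdiff_union_of_subset (s₂ := univ.image f) (s₁ := {f i, f j})
        (by simp [insert_subset_iff]),
      ← sdiff_union_of_subset (s₂ := univ.image g) (s₁ := {f i, f j})
        (by simp [insert_subset_iff, ← hgi, ← hgj])]
    exact congrArg (· ∪ _) hfg

section Patterns

variable {k n : ℕ}

def occurrences (σ : Equiv.Perm (Fin k)) (π : Equiv.Perm (Fin n)) : Finset (Fin k → Fin n) :=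
  (univ : Finset (Fin k → Fin n)).filter
      (fun f => (∀ i j : Fin k, i < j → f i < f j) ∧
        (∀ i j : Fin k, σ i < σ j ↔ π (f i) < π (f j)))

theorem patFreq_eq_card_occurrences_div (σ : Equiv.Perm (Fin k)) (π : Equiv.Perm (Fin n)) :
    patFreq σ π = #(occurrences σ π) / n.choose k := rfl

theorem mem_occurrences {σ : Equiv.Perm (Fin k)} {π : Equiv.Perm (Fin n)} {f : Fin k → Fin n} :
    f ∈ occurrences σ π ↔ StrictMono f ∧ ∀ i j, σ i < σ j ↔ π (f i) < π (f j) := by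
  simp only [occurrences, mem_filter, mem_univ, true_and]
  rfl

-- `(Tuple.sort v)⁻¹ i` is the rank of `v i` among the values of `v`.
def inducedPattern (π : Equiv.Perm (Fin n)) (f : Fin k → Fin n) : Equiv.Perm (Fin k) :=
  (Tuple.sort (π ∘ f))⁻¹

theorem mem_occurrences_iff_inducedPattern_eq {σ : Equiv.Perm (Fin k)} {π : Equiv.Perm (Fin n)}
    {f : Fin k → Fin n} :
    f ∈ occurrences σ π ↔ StrictMono f ∧ inducedPattern π f = σ := by
  rw [mem_occurrences]
  refine and_congr_right fun hf => ?_
  have hpat := Tuple.sort_inv_lt_sort_inv_iff (π.injective.comp hf.injective)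
  constructor
  · intro hσ
    exact Equiv.Perm.eq_of_forall_lt_iff_lt fun i j => (hpat i j).trans (hσ i j).symm
  · rintro rfl
    exact hpat

theorem sum_card_occurrences (π : Equiv.Perm (Fin n)) :
    ∑ σ : Equiv.Perm (Fin k), #(occurrences σ π) = n.choose k := by
  classical
  rw [← card_filter_strictMono,
    card_eq_sum_card_fiberwise (f := inducedPattern π) (t := univ)
      fun _ _ => mem_coe.2 (mem_univ _)]
  refine sum_congr rfl fun σ _ => congrArg card (ext fun f => ?_)
  simp [mem_occurrences_iff_inducedPattern_eq]

theorem sum_patFreq (hkn : k ≤ n) (π : Equiv.Perm (Fin n)) :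
    ∑ σ : Equiv.Perm (Fin k), patFreq σ π = 1 := by
  have hck : (n.choose k : ℚ) ≠ 0 := by exact_mod_cast (Nat.choose_pos hkn).ne'
  simp only [patFreq_eq_card_occurrences_div, ← sum_div]
  rw [div_eq_one_iff_eq hck]
  exact_mod_cast sum_card_occurrences (k := k) π

theorem patFreq_nonneg (σ : Equiv.Perm (Fin k)) (π : Equiv.Perm (Fin n)) :
    0 ≤ patFreq σ π := by
  rw [patFreq_eq_card_occurrences_div]
  positivity

theorem pair_mem_occurrences_swap {σ : Equiv.Perm (Fin k)} {π : Equiv.Perm (Fin n)}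
    {f : Fin k → Fin n} (hf : f ∈ occurrences σ π) {i j : Fin k} (hij : i < j)
    (hσ : σ j < σ i) :
    ![f i, f j] ∈ occurrences (Equiv.swap (0 : Fin 2) 1) π := by
  rw [mem_occurrences] at hf ⊢
  have hπ : π (f j) < π (f i) := (hf.2 j i).1 hσ
  refine ⟨by simpa using hf.1 hij, ?_⟩
  simp [Fin.forall_fin_two, hπ, hπ.le]

theorem card_occurrences_le_mul {σ : Equiv.Perm (Fin k)} (hσ : σ ≠ 1)
    (π : Equiv.Perm (Fin n)) :
    #(occurrences σ π) ≤
      (n - 2).choose (k - 2) * #(occurrences (Equiv.swap (0 : Fin 2) 1) π) := by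
  obtain ⟨i, j, hij, hinv⟩ := Equiv.Perm.exists_inversion_of_ne_one hσ
  refine card_le_mul_card_image_of_maps_to (fun f hf => pair_mem_occurrences_swap hf hij hinv) _
    fun g hg => (card_le_card fun f hf => ?_).trans
      (card_strictMono_with_two_values_le i j ((mem_occurrences.1 hg).1.injective.ne zero_ne_one))
  obtain ⟨hfσ, hfg⟩ := mem_filter.1 hf
  simp [(mem_occurrences.1 hfσ).1, ← hfg]

theorem patFreq_le_choose_two_mul {σ : Equiv.Perm (Fin k)} (hσ : σ ≠ 1)
    (π : Equiv.Perm (Fin n)) :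
    patFreq σ π ≤ k.choose 2 * patFreq (Equiv.swap (0 : Fin 2) 1) π := by
  rcases lt_or_ge n k with hnk | hkn
  · rw [patFreq_eq_card_occurrences_div σ, Nat.choose_eq_zero_of_lt hnk, Nat.cast_zero, div_zero]
    exact mul_nonneg (Nat.cast_nonneg _) (patFreq_nonneg _ _)
  obtain ⟨i, j, hij, -⟩ := Equiv.Perm.exists_inversion_of_ne_one hσ
  have hk : 2 ≤ k := by omega
  have hcount : (n.choose k * k.choose 2 : ℚ) = n.choose 2 * (n - 2).choose (k - 2) := by
    exact_mod_cast Nat.choose_mul hk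
  have hn2 : (0 : ℚ) < n.choose 2 := by exact_mod_cast Nat.choose_pos (hk.trans hkn)
  have hnk : (0 : ℚ) < n.choose k := by exact_mod_cast Nat.choose_pos hkn
  rw [patFreq_eq_card_occurrences_div, patFreq_eq_card_occurrences_div, div_le_iff₀ hnk]
  calc (#(occurrences σ π) : ℚ)
      ≤ (n - 2).choose (k - 2) * #(occurrences (Equiv.swap (0 : Fin 2) 1) π) := by
        exact_mod_cast card_occurrences_le_mul hσ π
    _ = k.choose 2 * (#(occurrences (Equiv.swap (0 : Fin 2) 1) π) / n.choose 2) *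
          n.choose k := by
        field_simp
        linear_combination (#(occurrences (Equiv.swap (0 : Fin 2) 1) π) : ℚ) * hcount.symm

end Patterns

/-- If a sequence of permutations `π_n ∈ S_n` satisfies
`t(21, π_n) → 0`, then for every `k` and every non-identity `σ ∈ S_k`,
`t(σ, π_n) → 0`, and consequently `t(id_k, π_n) → 1` for every `k`. -/
theorem inversion_freq_vanishes_implies (π : ∀ n : ℕ, Equiv.Perm (Fin n))
    (h : Tendsto (fun n => patFreq (Equiv.swap (0 : Fin 2) 1) (π n)) atTop (nhds 0)) :
    (∀ (k : ℕ) (σ : Equiv.Perm (Fin k)), σ ≠ 1 →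
      Tendsto (fun n => patFreq σ (π n)) atTop (nhds 0)) ∧
    (∀ k : ℕ,
      Tendsto (fun n => patFreq (1 : Equiv.Perm (Fin k)) (π n)) atTop (nhds 1)) := by
  have hnonid : ∀ (k : ℕ) (σ : Equiv.Perm (Fin k)), σ ≠ 1 →
      Tendsto (fun n => patFreq σ (π n)) atTop (nhds 0) := fun k σ hσ =>
    tendsto_of_tendsto_of_tendsto_of_le_of_le tendsto_const_nhds
      (by simpa using h.const_mul (k.choose 2 : ℚ))
      (fun n => patFreq_nonneg σ (π n)) (fun n => patFreq_le_choose_two_mul hσ (π n))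
  refine ⟨hnonid, fun k => ?_⟩
  set rest : ℕ → ℚ := fun n =>
    ∑ σ ∈ univ.erase (1 : Equiv.Perm (Fin k)), patFreq σ (π n)
  have hrest : Tendsto rest atTop (nhds 0) := by
    simpa only [sum_const_zero] using
      tendsto_finsetSum _ fun σ hσ => hnonid k σ (ne_of_mem_erase hσ)
  have hone : Tendsto (fun n => 1 - rest n) atTop (nhds 1) := by
    simpa only [sub_zero] using tendsto_const_nhds.sub hrest
  refine hone.congr' ?_
  filter_upwards [eventually_ge_atTop k] with n hkn
  rw [← sum_patFreq hkn (π n), ← add_sum_erase _ _ (mem_univ 1), add_sub_cancel_right]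
end
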